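/- (Bounded-multiplier duality.) Let O_{γ} denote the maximum of Σ_i H((1+x_i)/2) over x ∈ [-1,1]^n satisfying |a_j·x - t_j| ≤ γn for j ∈ [m] (value -∞ if infeasible), and similarly O_{2γ} with tolerance 2γn. Let O*_{γ,K} = min_{y∈[0,K/γ]^{2m}} max_{x∈[-1,1]^n} L(x,y) be the optimum of the dual with multipliers bounded by K/γ. Then O_γ ≤ O*_{γ,K} ≤ max{O_{2γ}, -(K-1)n}. -/

import Mathlib

/-!
Weak duality is the usual one: on a feasible point every admissible multiplier only increases
the Lagrangian. For the other inequality set `M = max(O_{2γ}, -(K-1)n)`. A point of the cube that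
is not `2γ`-feasible violates some one-sided constraint by at least `γn`, so paying `K/γ` per unit
of violation costs at least `Kn ≥ n - M`, while the entropy is at most `n`. Hence the entropy is
bounded on the whole cube by `M` plus `K/γ` times the total constraint violation. Separating the
hypograph image of the cube from the strict epigraph of this convex penalty produces an affine
function in between, whose slopes are multipliers in `[0, K/γ]` for which the Lagrangian stays
below `M`.
-/

open Finset Real

/-- The binary entropy function. -/
noncomputable def binH (p : ℝ) : ℝ := -(p * Real.log p) - (1 - p) * Real.log (1 - p)

/-- The maximum entropy over `x ∈ [-1,1]^n` satisfying `|a_j·x - t_j| ≤ γ'n` for all `j`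
(`⊥` if infeasible). -/
noncomputable def maxEntVal (n m : ℕ) (a : Fin m → Fin n → ℝ) (t : Fin m → ℝ) (γ' : ℝ) : EReal :=
  sSup {v : EReal | ∃ x : Fin n → ℝ, (∀ i, |x i| ≤ 1) ∧
    (∀ j, |(∑ i, a j i * x i) - t j| ≤ γ' * n) ∧
    v = ((∑ i, binH ((1 + x i) / 2) : ℝ) : EReal)}

/-- The optimum of the dual program with multipliers bounded by `K/γ`; the two-sided
constraints `|a_j·x - t_j| ≤ γn` are written as two one-sided affine constraints with
multipliers `y⁺, y⁻`. -/
noncomputable def boundedDualVal (n m : ℕ) (a : Fin m → Fin n → ℝ) (t : Fin m → ℝ)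
    (γ K : ℝ) : ℝ :=
  sInf {v : ℝ | ∃ yp ym : Fin m → ℝ,
    (∀ j, yp j ∈ Set.Icc (0:ℝ) (K / γ)) ∧ (∀ j, ym j ∈ Set.Icc (0:ℝ) (K / γ)) ∧
    v = ⨆ x : {x : Fin n → ℝ // ∀ i, |x i| ≤ 1},
      ((∑ i, binH ((1 + x.1 i) / 2))
        - ∑ j, yp j * ((∑ i, a j i * x.1 i) - t j - γ * n)
        - ∑ j, ym j * (t j - (∑ i, a j i * x.1 i) - γ * n))}

open Filter Topology

theorem convexOn_sum {E ι : Type*} [AddCommGroup E] [Module ℝ E] {s : Set E} (hs : Convex ℝ s)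
    (t : Finset ι) {f : ι → E → ℝ} (hf : ∀ i ∈ t, ConvexOn ℝ s (f i)) :
    ConvexOn ℝ s fun x => ∑ i ∈ t, f i x := by
  classical
  induction t using Finset.induction_on with
  | empty => simpa using convexOn_const 0 hs
  | insert i t hi ih =>
    simp only [Finset.sum_insert hi]
    exact (hf i (mem_insert_self i t)).add (ih fun j hj => hf j (mem_insert_of_mem hj))

theorem concaveOn_sum {E ι : Type*} [AddCommGroup E] [Module ℝ E] {s : Set E} (hs : Convex ℝ s)
    (t : Finset ι) {f : ι → E → ℝ} (hf : ∀ i ∈ t, ConcaveOn ℝ s (f i)) :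
    ConcaveOn ℝ s fun x => ∑ i ∈ t, f i x := by
  rw [← neg_convexOn_iff, Pi.neg_def]
  simpa using convexOn_sum hs t fun i hi => (hf i hi).neg

theorem nonpos_of_forall_nonneg_mul_add_le {a b C : ℝ} (h : ∀ s : ℝ, 0 ≤ s → s * a + b ≤ C) :
    a ≤ 0 := by
  by_contra! ha
  have h₀ := h 0 le_rfl
  have h₁ := h ((C - b + 1) / a) (div_nonneg (by linarith) ha.le)
  rw [div_mul_cancel₀ _ ha.ne'] at h₁
  linarith

theorem EReal.coe_le_max_of_forall_le {z c : ℝ} {X : EReal}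
    (h : ∀ M : ℝ, X ≤ M → c ≤ M → z ≤ M) : (z : EReal) ≤ max X c := by
  induction X using EReal.rec with
  | bot => simpa using h c bot_le le_rfl
  | coe x =>
    rw [← EReal.coe_strictMono.monotone.map_max]
    exact EReal.coe_le_coe_iff.2 (h _ (EReal.coe_le_coe_iff.2 (le_max_left _ _)) (le_max_right _ _))
  | top => simp

theorem exists_affine_between {E : Type*} [TopologicalSpace E] [AddCommGroup E] [Module ℝ E]
    [IsTopologicalAddGroup E] [ContinuousSMul ℝ E] {S : Set (E × ℝ)} (hS : Convex ℝ S)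
    (hSne : S.Nonempty) {P : E → ℝ} (hP : ConvexOn ℝ Set.univ P) (hPc : Continuous P)
    (hSP : ∀ p ∈ S, p.2 ≤ P p.1) :
    ∃ (ℓ : StrongDual ℝ E) (b : ℝ), (∀ p ∈ S, p.2 ≤ ℓ p.1 + b) ∧ ∀ u, ℓ u + b ≤ P u := by
  set D : Set (E × ℝ) := {p | P p.1 < p.2}
  have hDconv : Convex ℝ D := by simpa using hP.convex_strict_epigraph
  have hDopen : IsOpen D := isOpen_lt (hPc.comp continuous_fst) continuous_snd
  have hdisj : Disjoint D S :=
    Set.disjoint_left.2 fun p hpD hpS => (hSP p hpS).not_gt hpD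
  obtain ⟨φ, α, hφD, hφS⟩ := geometric_hahn_banach_open hDconv hDopen hS hdisj
  set ℓ : StrongDual ℝ E := φ.comp (ContinuousLinearMap.inl ℝ E ℝ)
  set β := φ (0, 1)
  have hφ : ∀ u v, φ (u, v) = ℓ u + β * v := by
    intro u v
    rw [show (u, v) = (u, 0) + v • ((0 : E), (1 : ℝ)) by simp, map_add, map_smul, smul_eq_mul,
      mul_comm]
    rfl
  -- `(u, P u)` is a limit of points of `D`.
  have hgraph : ∀ u, ℓ u + β * P u ≤ α := by
    intro u
    have hlim : Tendsto (fun ε => φ (u, P u + ε)) (𝓝[>] 0) (𝓝 (φ (u, P u))) :=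
      ((by fun_prop : Continuous fun ε : ℝ => φ (u, P u + ε)).tendsto' 0 _
        (by simp)).mono_left nhdsWithin_le_nhds
    rw [← hφ]
    exact le_of_tendsto hlim (eventually_nhdsWithin_of_forall fun ε hε =>
      (hφD _ (show P u < P u + ε by simpa using hε)).le)
  obtain ⟨⟨u₀, v₀⟩, hp₀⟩ := hSne
  have hβ : 0 < -β := by
    have h₁ := hφD (u₀, P u₀ + 1) (show P u₀ < P u₀ + 1 by linarith)
    have h₂ := hφS _ hp₀
    have h₃ : v₀ ≤ P u₀ := hSP _ hp₀
    rw [hφ] at h₁ h₂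
    nlinarith
  have hnormalize : ∀ u, ((-β)⁻¹ • ℓ) u + α / β = (ℓ u - α) / (-β) := fun u => by
    simp only [smul_apply, smul_eq_mul]
    field_simp
    ring
  refine ⟨(-β)⁻¹ • ℓ, α / β, fun p hp => ?_, fun u => ?_⟩
  · have := hφS p hp
    rw [hφ] at this
    rw [hnormalize, le_div_iff₀ hβ]
    linarith
  · have := hgraph u
    rw [hnormalize, div_le_iff₀ hβ]
    linarith

theorem exists_affine_majorant_of_le_penalty {ι : Type*} [Fintype ι] {S : Set ((ι → ℝ) × ℝ)}
    (hS : Convex ℝ S) (hSne : S.Nonempty) {M c : ℝ} (hc : 0 ≤ c)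
    (hSP : ∀ p ∈ S, p.2 ≤ M + c * ∑ k, max (p.1 k) 0) :
    ∃ y : ι → ℝ, (∀ k, y k ∈ Set.Icc 0 c) ∧ ∀ p ∈ S, p.2 ≤ M + ∑ k, y k * p.1 k := by
  classical
  set P : (ι → ℝ) → ℝ := fun u => M + c * ∑ k, max (u k) 0
  have hPconv : ConvexOn ℝ Set.univ P := (convexOn_const M convex_univ).add <|
    (convexOn_sum convex_univ univ fun k _ =>
      ((LinearMap.proj k).convexOn convex_univ).sup (convexOn_const 0 convex_univ)).smul hc
  obtain ⟨ℓ, b, hSℓ, hℓP⟩ := exists_affine_between hS hSne hPconv (by fun_prop) hSP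
  set y : ι → ℝ := fun k => ℓ (Pi.single k 1)
  have hℓ_single : ∀ k s, ℓ (Pi.single k s) = s * y k := fun k s => by
    rw [← smul_eq_mul, ← map_smul, ← Pi.single_smul', smul_eq_mul, mul_one]
  have hℓ : ∀ u, ℓ u = ∑ k, y k * u k := fun u => by
    conv_lhs => rw [← Finset.univ_sum_single u]
    simp only [map_sum, hℓ_single, mul_comm]
  have hP_single : ∀ k s, s * y k + b ≤ M + c * max s 0 := fun k s => by
    have hpen : ∑ j, max ((Pi.single k s : ι → ℝ) j) 0 = max s 0 := by
      simp [Pi.single_apply, apply_ite (max · (0:ℝ))]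
    simpa only [P, hℓ_single, hpen] using hℓP (Pi.single k s)
  have hb : b ≤ M := by simpa [P] using hℓP 0
  refine ⟨y, fun k => ⟨?_, ?_⟩, fun p hp => (hSℓ p hp).trans ?_⟩
  · refine neg_nonpos.1 (nonpos_of_forall_nonneg_mul_add_le (b := b) (C := M) fun s hs => ?_)
    have := hP_single k (-s)
    rw [max_eq_right (by linarith)] at this
    linarith
  · refine sub_nonpos.1 (nonpos_of_forall_nonneg_mul_add_le (b := b) (C := M) fun s hs => ?_)
    have := hP_single k s
    rw [max_eq_left hs] at this
    linarith
  · rw [hℓ]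
    linarith

theorem exists_multipliers_of_le_add_penalty {V ι : Type*} [AddCommGroup V] [Module ℝ V]
    [Fintype ι] {X : Set V} (hX : X.Nonempty) {f : V → ℝ} {g : ι → V → ℝ}
    (hf : ConcaveOn ℝ X f) (hg : ∀ k, ConvexOn ℝ X (g k)) {M c : ℝ} (hc : 0 ≤ c)
    (hpen : ∀ x ∈ X, f x ≤ M + c * ∑ k, max (g k x) 0) :
    ∃ y : ι → ℝ, (∀ k, y k ∈ Set.Icc 0 c) ∧ ∀ x ∈ X, f x - ∑ k, y k * g k x ≤ M := by
  set S : Set ((ι → ℝ) × ℝ) := {p | ∃ x ∈ X, (∀ k, g k x ≤ p.1 k) ∧ p.2 ≤ f x}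
  have hS : Convex ℝ S := by
    rintro p ⟨x, hx, hgp, hfp⟩ q ⟨x', hx', hgq, hfq⟩ a b ha hb hab
    refine ⟨a • x + b • x', hf.1 hx hx' ha hb hab, fun k => ?_, ?_⟩
    · calc g k (a • x + b • x') ≤ a * g k x + b * g k x' := (hg k).2 hx hx' ha hb hab
        _ ≤ a * p.1 k + b * q.1 k := by gcongr <;> [exact hgp k; exact hgq k]
        _ = (a • p + b • q).1 k := by simp
    · calc (a • p + b • q).2 = a * p.2 + b * q.2 := by simp
        _ ≤ a * f x + b * f x' := by gcongr
        _ ≤ f (a • x + b • x') := hf.2 hx hx' ha hb hab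
  have hmem : ∀ x ∈ X, ((fun k => g k x), f x) ∈ S := fun x hx => ⟨x, hx, fun _ => le_rfl, le_rfl⟩
  obtain ⟨x₀, hx₀⟩ := hX
  obtain ⟨y, hy, hyS⟩ := exists_affine_majorant_of_le_penalty hS ⟨_, hmem x₀ hx₀⟩ hc (by
    rintro p ⟨x, hx, hgp, hfp⟩
    calc p.2 ≤ f x := hfp
      _ ≤ M + c * ∑ k, max (g k x) 0 := hpen x hx
      _ ≤ M + c * ∑ k, max (p.1 k) 0 := by gcongr with k; exact hgp k)
  exact ⟨y, hy, fun x hx => sub_le_iff_le_add.2 (hyS _ (hmem x hx))⟩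

theorem le_add_mul_sum_max_zero {ι : Type*} [Fintype ι] {u : ι → ℝ} {v B M c δ : ℝ}
    (hc : 0 ≤ c) (hvB : v ≤ B) (hBM : B ≤ M + c * δ) (hfeas : (∀ k, u k ≤ δ) → v ≤ M) :
    v ≤ M + c * ∑ k, max (u k) 0 := by
  by_cases h : ∀ k, u k ≤ δ
  · have : 0 ≤ c * ∑ k, max (u k) 0 := mul_nonneg hc (sum_nonneg fun k _ => le_max_right _ _)
    linarith [hfeas h]
  · obtain ⟨k, hk⟩ := not_forall.1 h
    calc v ≤ M + c * δ := hvB.trans hBM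
      _ ≤ M + c * max (u k) 0 := by gcongr; exact (not_le.1 hk).le.trans (le_max_left _ _)
      _ ≤ M + c * ∑ k, max (u k) 0 := by
        gcongr; exact single_le_sum (fun j _ => le_max_right (u j) 0) (mem_univ k)

theorem sum_mul_le_mul_sum_max_zero {ι : Type*} [Fintype ι] {y u : ι → ℝ} {c : ℝ}
    (hy : ∀ k, y k ∈ Set.Icc 0 c) : ∑ k, y k * u k ≤ c * ∑ k, max (u k) 0 := by
  rw [mul_sum]
  refine sum_le_sum fun k _ => ?_
  calc y k * u k ≤ y k * max (u k) 0 := mul_le_mul_of_nonneg_left (le_max_left _ _) (hy k).1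
    _ ≤ c * max (u k) 0 := mul_le_mul_of_nonneg_right (hy k).2 (le_max_right _ _)

theorem binH_eq_binEntropy : binH = binEntropy :=
  funext fun p => by simp only [binH, binEntropy, log_inv]; ring

def cube (n : ℕ) : Set (Fin n → ℝ) := {x | ∀ i, |x i| ≤ 1}

theorem cube_eq_closedBall (n : ℕ) : cube n = Metric.closedBall 0 1 := by
  ext x; simp [cube, pi_norm_le_iff_of_nonneg]

theorem convex_cube (n : ℕ) : Convex ℝ (cube n) :=
  cube_eq_closedBall n ▸ convex_closedBall 0 1

theorem isCompact_cube (n : ℕ) : IsCompact (cube n) :=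
  cube_eq_closedBall n ▸ isCompact_closedBall 0 1

theorem zero_mem_cube (n : ℕ) : (0 : Fin n → ℝ) ∈ cube n := fun i => by simp

noncomputable def binEntropySum {n : ℕ} (x : Fin n → ℝ) : ℝ := ∑ i, binH ((1 + x i) / 2)

theorem continuous_binEntropySum (n : ℕ) : Continuous (binEntropySum (n := n)) := by
  unfold binEntropySum; rw [binH_eq_binEntropy]; fun_prop

theorem binEntropySum_le {n : ℕ} (x : Fin n → ℝ) : binEntropySum x ≤ n := by
  calc binEntropySum x ≤ ∑ _i : Fin n, (1 : ℝ) := sum_le_sum fun i _ => by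
        rw [binH_eq_binEntropy]
        exact binEntropy_le_log_two.trans (by linarith [log_two_lt_d9])
    _ = n := by simp

theorem concaveOn_binEntropySum (n : ℕ) : ConcaveOn ℝ (cube n) binEntropySum := by
  refine concaveOn_sum (convex_cube n) univ fun i _ => ?_
  let A : (Fin n → ℝ) →ᵃ[ℝ] ℝ :=
    { toFun := fun x => (1 + x i) / 2
      linear := (2⁻¹ : ℝ) • LinearMap.proj i
      map_vadd' := fun x v => by
        simp only [Pi.vadd_apply', vadd_eq_add, LinearMap.smul_apply, LinearMap.coe_proj,
          Function.eval, smul_eq_mul]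
        ring }
  rw [binH_eq_binEntropy]
  refine (strictConcave_binEntropy.concaveOn.comp_affineMap A).subset (fun x hx => ?_)
    (convex_cube n)
  have := abs_le.1 (hx i)
  simp only [AffineMap.coe_mk, Set.mem_preimage, Set.mem_Icc, A]
  constructor <;> linarith

section Lagrangian

variable {n m : ℕ} (a : Fin m → Fin n → ℝ) (t : Fin m → ℝ) (γ : ℝ)

/-- `|a_j·x - t_j| ≤ γn` split into `oneSidedConstraint (inl j) x ≤ 0` and
`oneSidedConstraint (inr j) x ≤ 0`. -/
def oneSidedConstraint : Fin m ⊕ Fin m → (Fin n → ℝ) → ℝ :=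
  Sum.elim (fun j x => (∑ i, a j i * x i) - t j - γ * n)
    (fun j x => t j - (∑ i, a j i * x i) - γ * n)

theorem forall_oneSidedConstraint_le_iff (x : Fin n → ℝ) (δ : ℝ) :
    (∀ k, oneSidedConstraint a t γ k x ≤ δ) ↔
      ∀ j, |(∑ i, a j i * x i) - t j| ≤ γ * n + δ := by
  simp only [Sum.forall, oneSidedConstraint, Sum.elim_inl, Sum.elim_inr, abs_le, ← forall_and]
  exact forall_congr' fun j => by constructor <;> rintro ⟨h₁, h₂⟩ <;> constructor <;> linarith

theorem convexOn_oneSidedConstraint (k : Fin m ⊕ Fin m) :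
    ConvexOn ℝ (cube n) (oneSidedConstraint a t γ k) := by
  have hrow : ∀ j, ConvexOn ℝ (cube n) fun x => ∑ i, a j i * x i := fun j =>
    ((LinearMap.proj j).comp (Matrix.mulVecLin a)).convexOn (convex_cube n)
  have hrow' : ∀ j, ConcaveOn ℝ (cube n) fun x => ∑ i, a j i * x i := fun j =>
    ((LinearMap.proj j).comp (Matrix.mulVecLin a)).concaveOn (convex_cube n)
  rcases k with j | j
  · exact ((hrow j).sub (concaveOn_const (t j + γ * n) (convex_cube n))).congr
      fun x _ => by simp only [oneSidedConstraint, Sum.elim_inl, Pi.sub_apply]; ring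
  · exact ((convexOn_const (t j - γ * n) (convex_cube n)).sub (hrow' j)).congr
      fun x _ => by simp only [oneSidedConstraint, Sum.elim_inr, Pi.sub_apply]; ring

theorem continuous_oneSidedConstraint (k : Fin m ⊕ Fin m) :
    Continuous (oneSidedConstraint a t γ k) := by
  rcases k with j | j <;> simp only [oneSidedConstraint, Sum.elim_inl, Sum.elim_inr] <;> fun_prop

noncomputable def lagrangian (y : Fin m ⊕ Fin m → ℝ) (x : Fin n → ℝ) : ℝ :=
  binEntropySum x - ∑ k, y k * oneSidedConstraint a t γ k x

noncomputable def dualFunction (y : Fin m ⊕ Fin m → ℝ) : ℝ :=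
  ⨆ x : cube n, lagrangian a t γ y x

theorem lagrangian_apply (y : Fin m ⊕ Fin m → ℝ) (x : Fin n → ℝ) :
    lagrangian a t γ y x = (∑ i, binH ((1 + x i) / 2))
      - ∑ j, y (Sum.inl j) * ((∑ i, a j i * x i) - t j - γ * n)
      - ∑ j, y (Sum.inr j) * (t j - (∑ i, a j i * x i) - γ * n) := by
  simp only [lagrangian, binEntropySum, Fintype.sum_sum_type, oneSidedConstraint, Sum.elim_inl,
    Sum.elim_inr, sub_sub]

theorem continuous_lagrangian (y : Fin m ⊕ Fin m → ℝ) : Continuous (lagrangian a t γ y) :=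
  (continuous_binEntropySum n).sub <| continuous_finsetSum _ fun k _ =>
    continuous_const.mul (continuous_oneSidedConstraint a t γ k)

theorem boundedDualVal_eq (K : ℝ) :
    boundedDualVal n m a t γ K =
      sInf (dualFunction a t γ '' {y | ∀ k, y k ∈ Set.Icc 0 (K / γ)}) := by
  unfold boundedDualVal
  congr 1
  ext v
  constructor
  · rintro ⟨yp, ym, hyp, hym, rfl⟩
    exact ⟨Sum.elim yp ym, Sum.forall.2 ⟨hyp, hym⟩, by
      simp only [dualFunction, lagrangian_apply, Sum.elim_inl, Sum.elim_inr]; rfl⟩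
  · rintro ⟨y, hy, rfl⟩
    exact ⟨y ∘ Sum.inl, y ∘ Sum.inr, fun j => hy _, fun j => hy _, by
      simp only [dualFunction, lagrangian_apply, Function.comp_apply]; rfl⟩

theorem lagrangian_le_dualFunction (y : Fin m ⊕ Fin m → ℝ) {x : Fin n → ℝ} (hx : x ∈ cube n) :
    lagrangian a t γ y x ≤ dualFunction a t γ y := by
  refine le_ciSup (f := fun x : cube n => lagrangian a t γ y x) ?_ ⟨x, hx⟩
  rw [← Set.image_eq_range]
  exact (isCompact_cube n).bddAbove_image (continuous_lagrangian a t γ y).continuousOn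

theorem dualFunction_le (y : Fin m ⊕ Fin m → ℝ) {M : ℝ}
    (h : ∀ x ∈ cube n, lagrangian a t γ y x ≤ M) : dualFunction a t γ y ≤ M :=
  have : Nonempty (cube n) := ⟨⟨0, zero_mem_cube n⟩⟩
  ciSup_le fun x => h x x.2

theorem bddBelow_dualFunction_image (c : ℝ) :
    BddBelow (dualFunction a t γ '' {y | ∀ k, y k ∈ Set.Icc 0 c}) := by
  refine ⟨binEntropySum (0 : Fin n → ℝ) - c * ∑ k, max (oneSidedConstraint a t γ k 0) 0, ?_⟩
  rintro _ ⟨y, hy, rfl⟩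
  refine le_trans ?_ (lagrangian_le_dualFunction a t γ y (zero_mem_cube n))
  simp only [lagrangian]
  linarith [sum_mul_le_mul_sum_max_zero (u := fun k => oneSidedConstraint a t γ k 0) hy]

theorem binEntropySum_le_maxEntVal {γ' : ℝ} {x : Fin n → ℝ} (hx : x ∈ cube n)
    (hfeas : ∀ j, |(∑ i, a j i * x i) - t j| ≤ γ' * n) :
    (binEntropySum x : EReal) ≤ maxEntVal n m a t γ' :=
  le_sSup ⟨x, hx, hfeas, rfl⟩

theorem maxEntVal_le_boundedDualVal {K : ℝ} (hKγ : 0 ≤ K / γ) :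
    maxEntVal n m a t γ ≤ boundedDualVal n m a t γ K := by
  rw [boundedDualVal_eq]
  refine sSup_le ?_
  rintro _ ⟨x, hx, hfeas, rfl⟩
  refine EReal.coe_le_coe_iff.2 (le_csInf ⟨_, 0, fun _ => ⟨le_rfl, hKγ⟩, rfl⟩ ?_)
  rintro _ ⟨y, hy, rfl⟩
  refine le_trans ?_ (lagrangian_le_dualFunction a t γ y hx)
  have hg : ∀ k, oneSidedConstraint a t γ k x ≤ 0 :=
    (forall_oneSidedConstraint_le_iff a t γ x 0).2 (by simpa using hfeas)
  have : ∑ k, y k * oneSidedConstraint a t γ k x ≤ 0 :=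
    sum_nonpos fun k _ => mul_nonpos_of_nonneg_of_nonpos (hy k).1 (hg k)
  simp only [lagrangian, binEntropySum]
  linarith

theorem boundedDualVal_le {K M : ℝ} (hγ : 0 < γ) (hK : 0 < K) (hM : -((K - 1) * n) ≤ M)
    (hfeas : ∀ x ∈ cube n, (∀ j, |(∑ i, a j i * x i) - t j| ≤ 2 * γ * n) →
      binEntropySum x ≤ M) :
    boundedDualVal n m a t γ K ≤ M := by
  have hc : 0 ≤ K / γ := (div_pos hK hγ).le
  have hBM : (n : ℝ) ≤ M + K / γ * (γ * n) := by
    rw [show K / γ * (γ * n) = K * n by field_simp]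
    linarith
  obtain ⟨y, hy, hyM⟩ := exists_multipliers_of_le_add_penalty ⟨0, zero_mem_cube n⟩
    (concaveOn_binEntropySum n) (convexOn_oneSidedConstraint a t γ) hc fun x hx =>
      le_add_mul_sum_max_zero hc (binEntropySum_le x) hBM fun h => hfeas x hx fun j => by
        have := (forall_oneSidedConstraint_le_iff a t γ x (γ * n)).1 h j
        linarith
  rw [boundedDualVal_eq]
  exact (csInf_le (bddBelow_dualFunction_image a t γ _) ⟨y, hy, rfl⟩).trans
    (dualFunction_le a t γ y hyM)

end Lagrangian

/-- bounded-multiplier duality: `O_γ ≤ O*_{γ,K} ≤ max{O_{2γ}, -(K-1)n}`. -/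
theorem bounded_multiplier_duality (n m : ℕ) (a : Fin m → Fin n → ℝ) (t : Fin m → ℝ)
    (γ K : ℝ) (hγ : 0 < γ) (hK : 0 < K) :
    maxEntVal n m a t γ ≤ ((boundedDualVal n m a t γ K : ℝ) : EReal) ∧
    ((boundedDualVal n m a t γ K : ℝ) : EReal)
      ≤ max (maxEntVal n m a t (2 * γ)) (((-((K - 1) * n) : ℝ)) : EReal) :=
  ⟨maxEntVal_le_boundedDualVal a t γ (div_pos hK hγ).le,
    EReal.coe_le_max_of_forall_le fun _ hO hM =>
      boundedDualVal_le a t γ hγ hK hM fun _ hx hfeas =>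
        EReal.coe_le_coe_iff.1 ((binEntropySum_le_maxEntVal a t hx hfeas).trans hO)⟩
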